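/- (a) If C ≥ 0 is such that for every n ∈ ℕ and all independent random variables X_1,…,X_n with E X_k = 0, E X_k² < ∞ and B_n² = Σ_k E X_k² > 0 one has Δ_n ≤ C·sup_{0<z<1}( |M_n(z)| + z·L_n(z) ), then C ≥ sup_{1/2<p<1} ( Φ(√((1−p)/p)) − (1−p) ) / ( √((1−p)³/p) + p ), and in particular C > 0.5685. (b) The same conclusion holds if instead Δ_n ≤ C·( |M_n(1)| + sup_{0<z<1} z·L_n(z) ) for all such n and X_1,…,X_n. -/

import Mathlib

open MeasureTheory ProbabilityTheory Real Set

/-- The standard normal distribution function. -/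
noncomputable def Phi (x : ℝ) : ℝ :=
  ∫ t in Set.Iic x, Real.exp (-t ^ 2 / 2) / Real.sqrt (2 * Real.pi)

/-- `B_n = sqrt (Σ E X_k²)`. -/
noncomputable def Bn {Ω : Type} [MeasurableSpace Ω] (μ : Measure Ω) {n : ℕ}
    (X : Fin n → Ω → ℝ) : ℝ :=
  Real.sqrt (∑ k, ∫ ω, (X k ω) ^ 2 ∂μ)

/-- Uniform distance between the d.f. of the normalized sum and the standard normal d.f. -/
noncomputable def Deltan {Ω : Type} [MeasurableSpace Ω] (μ : Measure Ω) {n : ℕ}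
    (X : Fin n → Ω → ℝ) : ℝ :=
  ⨆ x : ℝ, |(μ {ω | (∑ k, X k ω) / Bn μ X < x}).toReal - Phi x|

/-- `M_n(z) = B_n⁻³ Σ E[X_k³ 1_{|X_k| < z B_n}]`. -/
noncomputable def Mn {Ω : Type} [MeasurableSpace Ω] (μ : Measure Ω) {n : ℕ}
    (X : Fin n → Ω → ℝ) (z : ℝ) : ℝ :=
  (∑ k, ∫ ω, (if |X k ω| < z * Bn μ X then (X k ω) ^ 3 else 0) ∂μ) / (Bn μ X) ^ 3

/-- `L_n(z) = B_n⁻² Σ E[X_k² 1_{|X_k| ≥ z B_n}]` (the Lindeberg fraction). -/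
noncomputable def Lnn {Ω : Type} [MeasurableSpace Ω] (μ : Measure Ω) {n : ℕ}
    (X : Fin n → Ω → ℝ) (z : ℝ) : ℝ :=
  (∑ k, ∫ ω, (if z * Bn μ X ≤ |X k ω| then (X k ω) ^ 2 else 0) ∂μ) / (Bn μ X) ^ 2

/-- Hypotheses on the independent summands: measurability, independence, zero means,
finite second moments, positive total variance. -/
def GoodFamily {Ω : Type} [MeasurableSpace Ω] (μ : Measure Ω) {n : ℕ}
    (X : Fin n → Ω → ℝ) : Prop :=
  (∀ k, Measurable (X k)) ∧
  iIndepFun X μ ∧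
  (∀ k, Integrable (fun ω => (X k ω) ^ 2) μ) ∧
  (∀ k, ∫ ω, X k ω ∂μ = 0) ∧
  0 < ∑ k, ∫ ω, (X k ω) ^ 2 ∂μ

/-! A single centred Bernoulli summand `X = 1_A - p` with `P(A) = p ∈ (1/2, 1)` has
`B² = p(1 - p)`, and for `t = √((1 - p)/p) = (1 - p)/B` one has `P(X/B < t) = 1 - p`, so
`Δ ≥ Φ(t) - (1 - p)`. Since `B < p`, truncation at `zB` with `z < 1` never removes the atom `-p`,
and a direct computation gives `|M(z)| + z L(z) ≤ (1 - p) t + p = √((1 - p)³/p) + p`; hence every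
ratio in the supremum is a lower bound for `C`. In (b) the same bound holds when `t ≤ p`. Where
`t > p`, i.e. `t (1 + t²) > 1`, the ratio is at most `0.5685`, while at `p = 0.9059` it exceeds
`0.5685`. Both numerical facts come from integrating Taylor bounds for `exp (-x²/2)` over
`[0, t] ⊆ [0, 1]`. -/

lemma integrable_exp_neg_sq_div_two : Integrable fun x : ℝ => exp (-x ^ 2 / 2) := by
  simpa [neg_div, div_eq_inv_mul] using integrable_exp_neg_mul_sq (b := 1 / 2) (by norm_num)

lemma integral_exp_neg_sq_div_two : ∫ x : ℝ, exp (-x ^ 2 / 2) = √(2 * π) := by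
  simpa [neg_div, div_eq_inv_mul] using integral_gaussian (1 / 2)

lemma integral_Ioi_exp_neg_sq_div_two :
    ∫ x in Ioi (0 : ℝ), exp (-x ^ 2 / 2) = √(2 * π) / 2 := by
  simpa [neg_div, div_eq_inv_mul] using integral_gaussian_Ioi (1 / 2)

lemma Phi_eq (x : ℝ) : Phi x = (∫ t in Iic x, exp (-t ^ 2 / 2)) / √(2 * π) :=
  integral_div _ _

lemma Phi_zero : Phi 0 = 1 / 2 := by
  have h : ∫ t in Iic (0 : ℝ), exp (-t ^ 2 / 2) = √(2 * π) / 2 := by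
    rw [← integral_Ioi_exp_neg_sq_div_two, ← neg_zero, ← integral_comp_neg_Ioi]
    simp
  rw [Phi_eq, h]
  field_simp

lemma Phi_eq_half_add (x : ℝ) :
    Phi x = 1 / 2 + (∫ t in (0 : ℝ)..x, exp (-t ^ 2 / 2)) / √(2 * π) := by
  rw [← Phi_zero, ← intervalIntegral.integral_Iic_sub_Iic
    integrable_exp_neg_sq_div_two.integrableOn integrable_exp_neg_sq_div_two.integrableOn,
    Phi_eq, Phi_eq, sub_div]
  ring

lemma Phi_nonneg (x : ℝ) : 0 ≤ Phi x := by
  rw [Phi_eq]; positivity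

lemma Phi_le_one (x : ℝ) : Phi x ≤ 1 := by
  rw [Phi_eq, div_le_one (by positivity), ← integral_exp_neg_sq_div_two]
  exact setIntegral_le_integral integrable_exp_neg_sq_div_two
    (.of_forall fun t => (exp_pos _).le)

lemma exp_neg_sq_div_two_ge {x : ℝ} (hx : |x| ≤ 1) :
    1 - x ^ 2 / 2 + x ^ 4 / 8 - x ^ 6 / 36 ≤ exp (-x ^ 2 / 2) := by
  have hy : |-x ^ 2 / 2| = x ^ 2 / 2 := by rw [neg_div, abs_neg, abs_of_nonneg (by positivity)]
  have h := Real.exp_bound (x := -x ^ 2 / 2) (n := 3)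
    (by rw [hy]; nlinarith [sq_abs x, abs_nonneg x]) (by norm_num)
  rw [hy, Finset.sum_range_succ, Finset.sum_range_succ, Finset.sum_range_one] at h
  norm_num [Nat.factorial] at h
  linarith [(abs_le.1 h).1]

lemma exp_neg_sq_div_two_le {x : ℝ} (hx : |x| ≤ 1) :
    exp (-x ^ 2 / 2) ≤ 1 - x ^ 2 / 2 + 3 * x ^ 4 / 16 := by
  have hy : |-x ^ 2 / 2| = x ^ 2 / 2 := by rw [neg_div, abs_neg, abs_of_nonneg (by positivity)]
  have h := Real.exp_bound (x := -x ^ 2 / 2) (n := 2)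
    (by rw [hy]; nlinarith [sq_abs x, abs_nonneg x]) (by norm_num)
  rw [hy, Finset.sum_range_succ, Finset.sum_range_one] at h
  norm_num [Nat.factorial] at h
  linarith [(abs_le.1 h).2]

lemma integral_exp_neg_sq_div_two_ge {t : ℝ} (h0 : 0 ≤ t) (h1 : t ≤ 1) :
    t - t ^ 3 / 6 + t ^ 5 / 40 - t ^ 7 / 252 ≤ ∫ x in (0 : ℝ)..t, exp (-x ^ 2 / 2) := by
  calc t - t ^ 3 / 6 + t ^ 5 / 40 - t ^ 7 / 252
      = ∫ x in (0 : ℝ)..t, (1 - x ^ 2 / 2 + x ^ 4 / 8 - x ^ 6 / 36) := by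
        rw [intervalIntegral.integral_sub, intervalIntegral.integral_add,
          intervalIntegral.integral_sub]
        · simp only [intervalIntegral.integral_div, integral_pow, intervalIntegral.integral_const]
          ring
        all_goals apply Continuous.intervalIntegrable; fun_prop
    _ ≤ ∫ x in (0 : ℝ)..t, exp (-x ^ 2 / 2) :=
        intervalIntegral.integral_mono_on h0 (by apply Continuous.intervalIntegrable; fun_prop)
          (by apply Continuous.intervalIntegrable; fun_prop) fun x hx =>
          exp_neg_sq_div_two_ge (abs_le.2 ⟨by linarith [hx.1], hx.2.trans h1⟩)

lemma integral_exp_neg_sq_div_two_le {t : ℝ} (h0 : 0 ≤ t) (h1 : t ≤ 1) :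
    ∫ x in (0 : ℝ)..t, exp (-x ^ 2 / 2) ≤ t - t ^ 3 / 6 + 3 * t ^ 5 / 80 := by
  calc ∫ x in (0 : ℝ)..t, exp (-x ^ 2 / 2)
      ≤ ∫ x in (0 : ℝ)..t, (1 - x ^ 2 / 2 + 3 * x ^ 4 / 16) :=
        intervalIntegral.integral_mono_on h0 (by apply Continuous.intervalIntegrable; fun_prop)
          (by apply Continuous.intervalIntegrable; fun_prop) fun x hx =>
          exp_neg_sq_div_two_le (abs_le.2 ⟨by linarith [hx.1], hx.2.trans h1⟩)
    _ = t - t ^ 3 / 6 + 3 * t ^ 5 / 80 := by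
        rw [intervalIntegral.integral_add, intervalIntegral.integral_sub]
        · simp only [intervalIntegral.integral_div, intervalIntegral.integral_const_mul,
            integral_pow, intervalIntegral.integral_const]
          ring
        all_goals apply Continuous.intervalIntegrable; fun_prop

lemma sqrt_two_pi_mem_Ioo : √(2 * π) ∈ Ioo 2.5066 2.50663 := by
  constructor
  · rw [lt_sqrt (by norm_num)]; nlinarith [pi_gt_d6]
  · rw [sqrt_lt' (by norm_num)]; nlinarith [pi_lt_d6]

lemma lt_Phi_of_sq_eq {t : ℝ} (ht0 : 0 ≤ t) (ht2 : t ^ 2 = 941 / 9059) :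
    0.5685 * (t ^ 3 + 1) < (1 + t ^ 2) * Phi t - t ^ 2 := by
  have ht : 0.32229 ≤ t := by nlinarith
  have e3 : t ^ 3 = 941 / 9059 * t := by rw [pow_succ, ht2]
  have e5 : t ^ 5 = (941 / 9059) ^ 2 * t := by rw [show t ^ 5 = (t ^ 2) ^ 2 * t by ring, ht2]
  have e7 : t ^ 7 = (941 / 9059) ^ 3 * t := by rw [show t ^ 7 = (t ^ 2) ^ 3 * t by ring, ht2]
  have hI := integral_exp_neg_sq_div_two_ge ht0 (by nlinarith)
  have hL : 0 ≤ t - t ^ 3 / 6 + t ^ 5 / 40 - t ^ 7 / 252 := by rw [e3, e5, e7]; nlinarith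
  have hPhi : 1 / 2 + (t - t ^ 3 / 6 + t ^ 5 / 40 - t ^ 7 / 252) / 2.50663 ≤ Phi t := by
    rw [Phi_eq_half_add]
    gcongr 1 / 2 + ?_
    exact div_le_div₀ (hL.trans hI) hI (by positivity) sqrt_two_pi_mem_Ioo.2.le
  rw [e3, e5, e7] at hPhi
  rw [e3, ht2]
  norm_num at hPhi ⊢
  linarith

lemma Phi_le_of_mem_Icc {t : ℝ} (ht : t ∈ Icc 0.68 1) :
    (1 + t ^ 2) * Phi t - t ^ 2 ≤ 0.5685 * (t ^ 3 + 1) := by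
  obtain ⟨h0, h1⟩ := ht
  have ht0 : 0 ≤ t := by linarith
  have hPhi : Phi t ≤ 1 / 2 + (t - t ^ 3 / 6 + 3 * t ^ 5 / 80) / 2.5066 := by
    rw [Phi_eq_half_add]
    gcongr 1 / 2 + ?_
    exact div_le_div₀ (by nlinarith [pow_le_one₀ ht0 h1 (n := 3), pow_nonneg ht0 5])
      (integral_exp_neg_sq_div_two_le ht0 h1) (by norm_num) sqrt_two_pi_mem_Ioo.1.le
  have hpoly : (1 + t ^ 2) * (1 / 2 + (t - t ^ 3 / 6 + 3 * t ^ 5 / 80) / 2.5066) - t ^ 2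
      ≤ 0.5685 * (t ^ 3 + 1) := by
    have h7 : t ^ 7 ≤ t ^ 3 := pow_le_pow_of_le_one ht0 h1 (by norm_num)
    have hsq : 0.68 * t ≤ t ^ 2 := by nlinarith
    have hcube : 0.4624 * t ≤ t ^ 3 := by nlinarith
    ring_nf
    linarith [pow_nonneg ht0 5]
  linarith [mul_le_mul_of_nonneg_left hPhi (by positivity : (0 : ℝ) ≤ 1 + t ^ 2)]

noncomputable def esseenRatio (p : ℝ) : ℝ :=
  (Phi (√((1 - p) / p)) - (1 - p)) / (√((1 - p) ^ 3 / p) + p)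

lemma sqrt_one_sub_cube_div {p : ℝ} (hp : p ≤ 1) :
    √((1 - p) ^ 3 / p) = (1 - p) * √((1 - p) / p) := by
  rw [show (1 - p) ^ 3 / p = (1 - p) ^ 2 * ((1 - p) / p) by ring,
    sqrt_mul (sq_nonneg _), sqrt_sq (by linarith)]

lemma esseenRatio_le_iff {p C : ℝ} (hp₀ : 0 < p) (hp₁ : p ≤ 1) :
    esseenRatio p ≤ C ↔
      Phi (√((1 - p) / p)) - (1 - p) ≤ C * ((1 - p) * √((1 - p) / p) + p) := by
  have : 0 ≤ (1 - p) * √((1 - p) / p) := mul_nonneg (by linarith) (sqrt_nonneg _)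
  rw [esseenRatio, sqrt_one_sub_cube_div hp₁, div_le_iff₀ (by linarith)]

lemma esseenRatio_eq {p : ℝ} (hp₀ : 0 < p) (hp₁ : p ≤ 1) :
    esseenRatio p = ((1 + √((1 - p) / p) ^ 2) * Phi (√((1 - p) / p)) - √((1 - p) / p) ^ 2) /
      (√((1 - p) / p) ^ 3 + 1) := by
  set t := √((1 - p) / p) with ht
  have ht2 : t ^ 2 = (1 - p) / p := sq_sqrt (div_nonneg (by linarith) hp₀.le)
  have hp : p = 1 / (1 + t ^ 2) := by rw [ht2]; field_simp; ring
  rw [esseenRatio, sqrt_one_sub_cube_div hp₁, ← ht, hp]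
  field_simp
  ring

lemma lt_esseenRatio : 0.5685 < esseenRatio 0.9059 := by
  have ht : √((1 - 0.9059) / 0.9059 : ℝ) = √(941 / 9059) := by norm_num
  have ht2 : √(941 / 9059 : ℝ) ^ 2 = 941 / 9059 := sq_sqrt (by norm_num)
  rw [esseenRatio_eq (by norm_num) (by norm_num), ht, lt_div_iff₀ (by positivity)]
  exact lt_Phi_of_sq_eq (sqrt_nonneg _) ht2

lemma esseenRatio_le_of_lt_sqrt {p : ℝ} (hp : 1 / 2 < p) (hp₁ : p < 1)
    (h : p < √((1 - p) / p)) : esseenRatio p ≤ 0.5685 := by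
  set t := √((1 - p) / p) with ht
  have ht2 : t ^ 2 = (1 - p) / p := sq_sqrt (div_nonneg (by linarith) (by linarith))
  have hpt : p * (1 + t ^ 2) = 1 := by rw [ht2]; field_simp; ring
  have ht1 : t ≤ 1 := by nlinarith
  have ht68 : 0.68 ≤ t := by nlinarith
  rw [esseenRatio_eq (by linarith) hp₁.le, ← ht, div_le_iff₀ (by positivity)]
  exact Phi_le_of_mem_Icc ⟨ht68, ht1⟩

lemma sSup_esseenRatio_le {C : ℝ}
    (h : ∀ p ∈ Ioo (1 / 2 : ℝ) 1, √((1 - p) / p) ≤ p → esseenRatio p ≤ C) :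
    sSup (esseenRatio '' Ioo (1 / 2) 1) ≤ C ∧ 0.5685 < C := by
  have hC : 0.5685 < C := lt_esseenRatio.trans_le <| h _ (by norm_num) <| by
    rw [sqrt_le_left (by norm_num)]; norm_num
  refine ⟨csSup_le ((nonempty_Ioo.2 (by norm_num)).image _) ?_, hC⟩
  rintro _ ⟨p, hp, rfl⟩
  rcases le_or_gt √((1 - p) / p) p with htp | htp
  · exact h p hp htp
  · exact (esseenRatio_le_of_lt_sqrt hp.1 hp.2 htp).trans hC.le

lemma abs_sub_Phi_le_Deltan {Ω : Type} [MeasurableSpace Ω] {μ : Measure Ω}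
    [IsProbabilityMeasure μ] {n : ℕ} (X : Fin n → Ω → ℝ) (x : ℝ) :
    |(μ {ω | (∑ k, X k ω) / Bn μ X < x}).toReal - Phi x| ≤ Deltan μ X := by
  refine le_ciSup (f := fun x => |(μ {ω | (∑ k, X k ω) / Bn μ X < x}).toReal - Phi x|)
    ⟨1, ?_⟩ x
  rintro _ ⟨y, rfl⟩
  have h₀ : 0 ≤ (μ {ω | (∑ k, X k ω) / Bn μ X < y}).toReal := ENNReal.toReal_nonneg
  have h₁ : (μ {ω | (∑ k, X k ω) / Bn μ X < y}).toReal ≤ 1 := measureReal_le_one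
  exact abs_sub_le_of_nonneg_of_le h₀ h₁ (Phi_nonneg y) (Phi_le_one y) |>.trans (by norm_num)

noncomputable def twoPoint (p a b : ℝ) : Measure ℝ :=
  ENNReal.ofReal p • Measure.dirac a + ENNReal.ofReal (1 - p) • Measure.dirac b

lemma integrable_twoPoint (p a b : ℝ) (f : ℝ → ℝ) : Integrable f (twoPoint p a b) :=
  ((integrable_dirac enorm_lt_top).smul_measure ENNReal.ofReal_ne_top).add_measure
    ((integrable_dirac enorm_lt_top).smul_measure ENNReal.ofReal_ne_top)

lemma isProbabilityMeasure_twoPoint {p : ℝ} (hp₀ : 0 ≤ p) (hp₁ : p ≤ 1) (a b : ℝ) :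
    IsProbabilityMeasure (twoPoint p a b) := by
  constructor
  simp only [twoPoint, Measure.add_apply, Measure.smul_apply, measure_univ, smul_eq_mul, mul_one]
  rw [← ENNReal.ofReal_add hp₀ (by linarith)]
  simp

lemma integral_twoPoint {p : ℝ} (hp₀ : 0 ≤ p) (hp₁ : p ≤ 1) (a b : ℝ)
    (f : ℝ → ℝ) : ∫ x, f x ∂twoPoint p a b = p * f a + (1 - p) * f b := by
  have hf : ∀ c, Integrable f (Measure.dirac c) := fun c => integrable_dirac enorm_lt_top
  rw [twoPoint, integral_add_measure ((hf a).smul_measure ENNReal.ofReal_ne_top)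
    ((hf b).smul_measure ENNReal.ofReal_ne_top), integral_smul_measure, integral_smul_measure,
    integral_dirac, integral_dirac, ENNReal.toReal_ofReal hp₀,
    ENNReal.toReal_ofReal (by linarith), smul_eq_mul, smul_eq_mul]

lemma twoPoint_toReal_apply {p : ℝ} (hp₀ : 0 ≤ p) (hp₁ : p ≤ 1) (a b : ℝ) {s : Set ℝ}
    (hs : MeasurableSet s) :
    (twoPoint p a b s).toReal = p * s.indicator 1 a + (1 - p) * s.indicator 1 b := by
  have := isProbabilityMeasure_twoPoint hp₀ hp₁ a b
  rw [← measureReal_def, ← integral_indicator_one hs, integral_twoPoint hp₀ hp₁]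

noncomputable def centeredBernoulli (p : ℝ) : Measure ℝ := twoPoint p (1 - p) (-p)

def idSummand : Fin 1 → ℝ → ℝ := fun _ => id

section CenteredBernoulli

variable {p : ℝ}

lemma integral_idSummand (hp₀ : 0 ≤ p) (hp₁ : p ≤ 1) (k : Fin 1) (f : ℝ → ℝ) :
    ∫ ω, f (idSummand k ω) ∂centeredBernoulli p = p * f (1 - p) + (1 - p) * f (-p) :=
  integral_twoPoint hp₀ hp₁ _ _ f

lemma isProbabilityMeasure_centeredBernoulli (hp₀ : 0 ≤ p) (hp₁ : p ≤ 1) :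
    IsProbabilityMeasure (centeredBernoulli p) :=
  isProbabilityMeasure_twoPoint hp₀ hp₁ _ _

lemma goodFamily_centeredBernoulli (hp₀ : 0 < p) (hp₁ : p < 1) :
    GoodFamily (centeredBernoulli p) idSummand := by
  have := isProbabilityMeasure_centeredBernoulli hp₀.le hp₁.le
  refine ⟨fun _ => measurable_id, .of_subsingleton, fun _ => integrable_twoPoint _ _ _ _,
    fun _ => ?_, ?_⟩
  · rw [integral_idSummand hp₀.le hp₁.le _ (fun x => x)]; ring
  · rw [Fin.sum_univ_one, integral_idSummand hp₀.le hp₁.le _ (fun x => x ^ 2)]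
    nlinarith

lemma Bn_centeredBernoulli (hp₀ : 0 ≤ p) (hp₁ : p ≤ 1) :
    Bn (centeredBernoulli p) idSummand = √(p * (1 - p)) := by
  rw [Bn, Fin.sum_univ_one, integral_idSummand hp₀ hp₁ _ (fun x => x ^ 2)]
  ring_nf

lemma sqrt_mul_Bn_centeredBernoulli (hp₀ : 0 < p) (hp₁ : p ≤ 1) :
    √((1 - p) / p) * Bn (centeredBernoulli p) idSummand = 1 - p := by
  rw [Bn_centeredBernoulli hp₀.le hp₁, ← sqrt_mul (div_nonneg (by linarith) hp₀.le),
    show (1 - p) / p * (p * (1 - p)) = (1 - p) ^ 2 by field_simp, sqrt_sq (by linarith)]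

lemma sq_Bn_centeredBernoulli (hp₀ : 0 ≤ p) (hp₁ : p ≤ 1) :
    Bn (centeredBernoulli p) idSummand ^ 2 = p * (1 - p) := by
  rw [Bn_centeredBernoulli hp₀ hp₁, sq_sqrt (by nlinarith)]

lemma Bn_centeredBernoulli_pos (hp₀ : 0 < p) (hp₁ : p < 1) :
    0 < Bn (centeredBernoulli p) idSummand := by
  rw [Bn_centeredBernoulli hp₀.le hp₁.le]
  exact sqrt_pos.2 (by nlinarith)

lemma Bn_centeredBernoulli_lt (hp : 1 / 2 < p) (hp₁ : p < 1) :
    Bn (centeredBernoulli p) idSummand < p := by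
  nlinarith [sq_Bn_centeredBernoulli (by linarith) hp₁.le,
    Bn_centeredBernoulli_pos (by linarith) hp₁]

lemma Phi_sub_le_Deltan_centeredBernoulli (hp₀ : 0 < p) (hp₁ : p < 1) :
    Phi (√((1 - p) / p)) - (1 - p) ≤ Deltan (centeredBernoulli p) idSummand := by
  have := isProbabilityMeasure_centeredBernoulli hp₀.le hp₁.le
  have hB := Bn_centeredBernoulli_pos hp₀ hp₁
  have hset :
      {x : ℝ | (∑ k, idSummand k x) / Bn (centeredBernoulli p) idSummand < √((1 - p) / p)} =
        Iio (1 - p) := by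
    ext x
    simp only [idSummand, id, Fin.sum_univ_one, mem_ofPred_eq, mem_Iio, div_lt_iff₀ hB,
      sqrt_mul_Bn_centeredBernoulli hp₀ hp₁.le]
  have hmeas : (centeredBernoulli p (Iio (1 - p))).toReal = 1 - p := by
    rw [centeredBernoulli, twoPoint_toReal_apply hp₀.le hp₁.le _ _ measurableSet_Iio,
      indicator_of_notMem (by simp),
      indicator_of_mem (show -p ∈ Iio (1 - p) by simp only [mem_Iio]; linarith)]
    simp
  have h := abs_sub_Phi_le_Deltan (μ := centeredBernoulli p) idSummand (√((1 - p) / p))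
  rw [hset, hmeas, abs_sub_comm] at h
  exact (le_abs_self _).trans h

lemma Mn_centeredBernoulli (hp : 1 / 2 < p) (hp₁ : p < 1) {z : ℝ} (hz : z ≤ 1) :
    Mn (centeredBernoulli p) idSummand z =
      if √((1 - p) / p) < z then (1 - p) * √((1 - p) / p) else 0 := by
  have hp₀ : 0 < p := by linarith
  rw [Mn, Fin.sum_univ_one, integral_idSummand hp₀.le hp₁.le _
    (fun x => if |x| < z * Bn (centeredBernoulli p) idSummand then x ^ 3 else 0)]
  set B := Bn (centeredBernoulli p) idSummand
  set t := √((1 - p) / p)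
  have hB : 0 < B := Bn_centeredBernoulli_pos hp₀ hp₁
  have htB : t * B = 1 - p := sqrt_mul_Bn_centeredBernoulli hp₀ hp₁.le
  have hB2 : B ^ 2 = p * (1 - p) := sq_Bn_centeredBernoulli hp₀.le hp₁.le
  have hzB : ¬ p < z * B := by nlinarith [Bn_centeredBernoulli_lt hp hp₁]
  have hcase : 1 - p < z * B ↔ t < z := by rw [← htB, mul_lt_mul_iff_left₀ hB]
  simp only [abs_neg, abs_of_pos hp₀, abs_of_pos (sub_pos.2 hp₁), if_neg hzB, hcase]
  split_ifs
  · field_simp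
    linear_combination (-(1 - p) * B ^ 2) * htB + (-(1 - p) ^ 2) * hB2
  · simp

lemma Lnn_centeredBernoulli (hp : 1 / 2 < p) (hp₁ : p < 1) {z : ℝ} (hz : z ≤ 1) :
    Lnn (centeredBernoulli p) idSummand z = if z ≤ √((1 - p) / p) then 1 else p := by
  have hp₀ : 0 < p := by linarith
  rw [Lnn, Fin.sum_univ_one, integral_idSummand hp₀.le hp₁.le _
    (fun x => if z * Bn (centeredBernoulli p) idSummand ≤ |x| then x ^ 2 else 0)]
  set B := Bn (centeredBernoulli p) idSummand
  set t := √((1 - p) / p)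
  have hB : 0 < B := Bn_centeredBernoulli_pos hp₀ hp₁
  have htB : t * B = 1 - p := sqrt_mul_Bn_centeredBernoulli hp₀ hp₁.le
  have hB2 : B ^ 2 = p * (1 - p) := sq_Bn_centeredBernoulli hp₀.le hp₁.le
  have hzB : z * B ≤ p := by nlinarith [Bn_centeredBernoulli_lt hp hp₁]
  have hcase : z * B ≤ 1 - p ↔ z ≤ t := by rw [← htB, mul_le_mul_iff_left₀ hB]
  simp only [abs_neg, abs_of_pos hp₀, abs_of_pos (sub_pos.2 hp₁), if_pos hzB, hcase]
  split_ifs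
  · rw [div_eq_one_iff_eq (by positivity), hB2]; ring
  · rw [div_eq_iff (by positivity), hB2]; ring

lemma sqrt_one_sub_div_lt_one (hp : 1 / 2 < p) : √((1 - p) / p) < 1 := by
  rw [sqrt_lt' one_pos, one_pow, div_lt_one (by linarith)]
  linarith

lemma sSup_abs_Mn_add_mul_Lnn_centeredBernoulli_le (hp : 1 / 2 < p) (hp₁ : p < 1) :
    sSup ((fun z => |Mn (centeredBernoulli p) idSummand z| +
        z * Lnn (centeredBernoulli p) idSummand z) '' Ioo 0 1) ≤
      (1 - p) * √((1 - p) / p) + p := by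
  have ht0 := sqrt_nonneg ((1 - p) / p)
  have ht1 := sqrt_one_sub_div_lt_one hp
  refine Real.sSup_le ?_ (by nlinarith)
  rintro _ ⟨z, hz, rfl⟩
  dsimp only
  rw [Mn_centeredBernoulli hp hp₁ hz.2.le, Lnn_centeredBernoulli hp hp₁ hz.2.le]
  split_ifs
  · linarith
  · rw [abs_of_nonneg (by nlinarith)]; nlinarith [hz.2]
  · nlinarith
  · linarith

lemma abs_Mn_one_add_sSup_mul_Lnn_centeredBernoulli_le (hp : 1 / 2 < p) (hp₁ : p < 1)
    (htp : √((1 - p) / p) ≤ p) :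
    |Mn (centeredBernoulli p) idSummand 1| +
        sSup ((fun z => z * Lnn (centeredBernoulli p) idSummand z) '' Ioo 0 1) ≤
      (1 - p) * √((1 - p) / p) + p := by
  have ht0 := sqrt_nonneg ((1 - p) / p)
  have hM : |Mn (centeredBernoulli p) idSummand 1| = (1 - p) * √((1 - p) / p) := by
    rw [Mn_centeredBernoulli hp hp₁ le_rfl, if_pos (sqrt_one_sub_div_lt_one hp),
      abs_of_nonneg (mul_nonneg (by linarith) ht0)]
  have hL : sSup ((fun z => z * Lnn (centeredBernoulli p) idSummand z) '' Ioo 0 1) ≤ p := by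
    refine Real.sSup_le ?_ (by linarith)
    rintro _ ⟨z, hz, rfl⟩
    dsimp only
    rw [Lnn_centeredBernoulli hp hp₁ hz.2.le]
    split_ifs
    · linarith
    · nlinarith [hz.2]
  linarith

lemma esseenRatio_le_of_Deltan_centeredBernoulli_le (hp : 1 / 2 < p) (hp₁ : p < 1) {C S : ℝ}
    (hC : 0 ≤ C) (hΔ : Deltan (centeredBernoulli p) idSummand ≤ C * S)
    (hS : S ≤ (1 - p) * √((1 - p) / p) + p) : esseenRatio p ≤ C := by
  rw [esseenRatio_le_iff (by linarith) hp₁.le]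
  exact (Phi_sub_le_Deltan_centeredBernoulli (by linarith) hp₁).trans
    (hΔ.trans (mul_le_mul_of_nonneg_left hS hC))

end CenteredBernoulli

theorem lower_bound_esseen_rozovskii_1_1 :
    (∀ C : ℝ, 0 ≤ C →
      (∀ (Ω : Type) (mΩ : MeasurableSpace Ω) (μ : Measure Ω), IsProbabilityMeasure μ →
        ∀ (n : ℕ) (X : Fin n → Ω → ℝ), GoodFamily μ X →
          Deltan μ X ≤
            C * sSup ((fun z => |Mn μ X z| + z * Lnn μ X z) '' Set.Ioo (0 : ℝ) 1)) →
      sSup ((fun p => (Phi (Real.sqrt ((1 - p) / p)) - (1 - p)) /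
          (Real.sqrt ((1 - p) ^ 3 / p) + p)) '' Set.Ioo (1/2 : ℝ) 1) ≤ C ∧
      0.5685 < C) ∧
    (∀ C : ℝ, 0 ≤ C →
      (∀ (Ω : Type) (mΩ : MeasurableSpace Ω) (μ : Measure Ω), IsProbabilityMeasure μ →
        ∀ (n : ℕ) (X : Fin n → Ω → ℝ), GoodFamily μ X →
          Deltan μ X ≤
            C * (|Mn μ X 1| +
              sSup ((fun z => z * Lnn μ X z) '' Set.Ioo (0 : ℝ) 1))) →
      sSup ((fun p => (Phi (Real.sqrt ((1 - p) / p)) - (1 - p)) /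
          (Real.sqrt ((1 - p) ^ 3 / p) + p)) '' Set.Ioo (1/2 : ℝ) 1) ≤ C ∧
      0.5685 < C) := by
  refine ⟨fun C hC H => sSup_esseenRatio_le fun p hp _ => ?_,
    fun C hC H => sSup_esseenRatio_le fun p hp htp => ?_⟩
  · have hp₀ : 0 < p := by linarith [hp.1]
    exact esseenRatio_le_of_Deltan_centeredBernoulli_le hp.1 hp.2 hC
      (H ℝ _ _ (isProbabilityMeasure_centeredBernoulli hp₀.le hp.2.le) 1 idSummand
        (goodFamily_centeredBernoulli hp₀ hp.2))
      (sSup_abs_Mn_add_mul_Lnn_centeredBernoulli_le hp.1 hp.2)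
  · have hp₀ : 0 < p := by linarith [hp.1]
    exact esseenRatio_le_of_Deltan_centeredBernoulli_le hp.1 hp.2 hC
      (H ℝ _ _ (isProbabilityMeasure_centeredBernoulli hp₀.le hp.2.le) 1 idSummand
        (goodFamily_centeredBernoulli hp₀ hp.2))
      (abs_Mn_one_add_sSup_mul_Lnn_centeredBernoulli_le hp.1 hp.2 htp)
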